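/- For V uniform on (0, V_max), N nodes, psi = 0, the equal-value threshold v_eq = V_max * sqrt((N-1)/(N+1)) (for N >= 2) maximizes the symmetric equal-threshold reward R(v) = N * ((V_max + v)/2) * (1 - v/V_max) * (v/V_max)^{N-1} over v in [0, V_max]. -/
import Mathlib

lemma keyAM (n : ℕ) (hn : 1 ≤ n) (x : ℝ) (hx0 : 0 ≤ x) (hx1 : x ≤ 1) :
    x ^ n * (1 - x) ^ 2 ≤ ((n : ℝ)/((n:ℝ)+2)) ^ n * (1 - (n : ℝ)/((n:ℝ)+2)) ^ 2 := by
  have hn0 : (0:ℝ) < (n:ℝ) := by exact_mod_cast hn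
  have hd : (0:ℝ) < (n:ℝ) + 2 := by linarith
  have hd' : ((n:ℝ) + 2) ≠ 0 := ne_of_gt hd
  have hn' : (n:ℝ) ≠ 0 := ne_of_gt hn0
  have hx1' : 0 ≤ 1 - x := by linarith
  have hp₂ : 0 ≤ (n:ℝ) * (1 - x) / 2 := by positivity
  have hsum : (n:ℝ)/((n:ℝ)+2) + 2/((n:ℝ)+2) = 1 := by field_simp
  have h1 : x ^ ((n:ℝ)/((n:ℝ)+2)) * ((n:ℝ) * (1 - x) / 2) ^ (2/((n:ℝ)+2))
      ≤ (n:ℝ)/((n:ℝ)+2) * x + 2/((n:ℝ)+2) * ((n:ℝ) * (1 - x) / 2) :=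
    Real.geom_mean_le_arith_mean2_weighted (by positivity) (by positivity) hx0 hp₂ hsum
  have h2 : (n:ℝ)/((n:ℝ)+2) * x + 2/((n:ℝ)+2) * ((n:ℝ) * (1 - x) / 2)
      = (n:ℝ)/((n:ℝ)+2) := by field_simp; ring
  rw [h2] at h1
  have hA0 : 0 ≤ x ^ ((n:ℝ)/((n:ℝ)+2)) * ((n:ℝ) * (1 - x) / 2) ^ (2/((n:ℝ)+2)) := by
    positivity
  have h3 := pow_le_pow_left₀ hA0 h1 (n + 2)
  have h4 : (x ^ ((n:ℝ)/((n:ℝ)+2)) * ((n:ℝ) * (1 - x) / 2) ^ (2/((n:ℝ)+2))) ^ (n + 2)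
      = x ^ n * ((n:ℝ) * (1 - x) / 2) ^ 2 := by
    rw [mul_pow, ← Real.rpow_natCast (x ^ ((n:ℝ)/((n:ℝ)+2))),
      ← Real.rpow_natCast (((n:ℝ) * (1 - x) / 2) ^ (2/((n:ℝ)+2))),
      ← Real.rpow_mul hx0, ← Real.rpow_mul hp₂]
    have e1 : (n:ℝ)/((n:ℝ)+2) * ((n + 2 : ℕ) : ℝ) = (n : ℝ) := by push_cast; field_simp
    have e2 : 2/((n:ℝ)+2) * ((n + 2 : ℕ) : ℝ) = (2 : ℝ) := by push_cast; field_simp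
    rw [e1, e2, show (2:ℝ) = ((2:ℕ):ℝ) by norm_num, Real.rpow_natCast, Real.rpow_natCast]
  rw [h4] at h3
  have e3 : x ^ n * (1 - x) ^ 2 = (x ^ n * ((n:ℝ) * (1 - x) / 2) ^ 2) * (4 / (n:ℝ)^2) := by
    field_simp; ring
  have e4 : ((n : ℝ)/((n:ℝ)+2)) ^ n * (1 - (n : ℝ)/((n:ℝ)+2)) ^ 2
      = ((n : ℝ)/((n:ℝ)+2)) ^ (n + 2) * (4 / (n:ℝ)^2) := by
    rw [pow_add]; field_simp; ring
  rw [e3, e4]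
  exact mul_le_mul_of_nonneg_right h3 (by positivity)

/-- For values uniform on (0, Vmax), N ≥ 2 nodes and zero cost, the equal-value
threshold v* = Vmax·√((N-1)/(N+1)) maximizes
R(v) = N·((Vmax+v)/2)·(1 - v/Vmax)·(v/Vmax)^{N-1} over v ∈ [0, Vmax]. -/
theorem uniform_equal_value_threshold (N : ℕ) (hN : 2 ≤ N) (Vmax : ℝ)
    (hV : 0 < Vmax) :
    let R : ℝ → ℝ := fun v =>
      N * ((Vmax + v) / 2) * (1 - v / Vmax) * (v / Vmax) ^ (N - 1)
    ∀ v ∈ Set.Icc (0 : ℝ) Vmax,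
      R v ≤ R (Vmax * Real.sqrt (((N : ℝ) - 1) / ((N : ℝ) + 1))) := by
  intro R v hv
  obtain ⟨hv0, hv1⟩ := hv
  obtain ⟨n, rfl⟩ : ∃ n, N = n + 1 := ⟨N - 1, (Nat.succ_pred_eq_of_pos (by omega)).symm⟩
  have hn : 1 ≤ n := by omega
  have hn0 : (0:ℝ) < (n:ℝ) := by exact_mod_cast hn
  have hd : (0:ℝ) < (n:ℝ) + 2 := by linarith
  have hcast : (((n+1 : ℕ)) : ℝ) - 1 = (n:ℝ) := by push_cast; ring
  have hcast2 : (((n+1 : ℕ)) : ℝ) + 1 = (n:ℝ) + 2 := by push_cast; ring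
  have harg : (((n+1 : ℕ) : ℝ) - 1) / (((n+1 : ℕ) : ℝ) + 1) = (n:ℝ)/((n:ℝ)+2) := by
    rw [hcast, hcast2]
  set a : ℝ := Real.sqrt ((((n+1 : ℕ) : ℝ) - 1) / (((n+1 : ℕ) : ℝ) + 1)) with hadef
  have ha0 : 0 ≤ a := Real.sqrt_nonneg _
  have ha2 : a ^ 2 = (n:ℝ)/((n:ℝ)+2) := by
    rw [hadef, harg, Real.sq_sqrt (by positivity)]
  have ha1 : a ≤ 1 := by
    rw [hadef, harg]
    exact Real.sqrt_le_one.mpr (by rw [div_le_one hd]; linarith)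
  set t : ℝ := v / Vmax with htdef
  have ht0 : 0 ≤ t := by positivity
  have ht1 : t ≤ 1 := by rw [htdef, div_le_one hV]; exact hv1
  have hveq : v = Vmax * t := by rw [htdef]; field_simp
  have key : ∀ s : ℝ, R (Vmax * s) = (((n+1:ℕ)):ℝ) * Vmax / 2 * ((1 - s^2) * s^n) := by
    intro s
    show (((n+1:ℕ)):ℝ) * ((Vmax + Vmax * s)/2) * (1 - (Vmax * s)/Vmax)
        * ((Vmax * s)/Vmax) ^ (n + 1 - 1) = _
    rw [mul_div_cancel_left₀ _ (ne_of_gt hV)]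
    simp only [Nat.add_sub_cancel]
    ring
  rw [hveq, key t, key a]
  have hmain : (1 - t^2) * t^n ≤ (1 - a^2) * a^n := by
    have h1 : ((1 - t^2) * t^n)^2 ≤ ((1 - a^2) * a^n)^2 := by
      have hk := keyAM n hn (t^2) (by positivity) (by nlinarith)
      calc ((1 - t^2) * t^n)^2 = (t^2)^n * (1 - t^2)^2 := by
              rw [mul_pow, ← pow_mul, ← pow_mul, Nat.mul_comm]; ring
        _ ≤ ((n : ℝ)/((n:ℝ)+2)) ^ n * (1 - (n : ℝ)/((n:ℝ)+2)) ^ 2 := hk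
        _ = ((1 - a^2) * a^n)^2 := by
              rw [← ha2, mul_pow, ← pow_mul, ← pow_mul, Nat.mul_comm]; ring
    have hR0 : 0 ≤ (1 - a^2) * a^n := by
      have : a^2 ≤ 1 := by nlinarith
      have : 0 ≤ 1 - a^2 := by linarith
      positivity
    exact (abs_le_of_sq_le_sq' h1 hR0).2
  have hc : 0 ≤ (((n+1:ℕ)):ℝ) * Vmax / 2 := by positivity
  exact mul_le_mul_of_nonneg_left hmain hc
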